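/- Behavioral inclusion (finite-trajectory core): Let Q be a feedback refinement relation from simple system S₁ to simple system S₂. Let T ∈ ℕ ∪ {∞}, let u : [0;T) → U₂, x₁ : [0;T) → X₁ with x₁(t+1) ∈ F₁(x₁(t),u(t)) for all t+1 < T, and suppose x₂ : [0;T) → X₂ satisfies x₂(t) ∈ Q(x₁(t)) and u(t) ∈ U_{S₂}(x₂(t)) for all t+1 < T. Then: (a) x₂(t+1) ∈ F₂(x₂(t),u(t)) for all t+1 < T; and (b) if T < ∞ and u(T−1) ∈ U_{S₂}(x₂(T−1)), then F₁(x₁(T−1), u(T−1)) ≠ ∅. -/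

import Mathlib

def IsFRR {X₁ X₂ U : Type*} (U₁ U₂ : Set U)
    (F₁ : X₁ → U → Set X₁) (F₂ : X₂ → U → Set X₂) (Q : X₁ → X₂ → Prop) : Prop :=
  U₂ ⊆ U₁ ∧ (∀ x₁, ∃ x₂, Q x₁ x₂) ∧
  ∀ x₁ x₂, Q x₁ x₂ → ∀ u ∈ U₂, (F₂ x₂ u).Nonempty →
    (F₁ x₁ u).Nonempty ∧ ∀ x₁' ∈ F₁ x₁ u, ∀ x₂', Q x₁' x₂' → x₂' ∈ F₂ x₂ u

namespace IsFRR

variable {X₁ X₂ U : Type*} {U₁ U₂ : Set U} {F₁ : X₁ → U → Set X₁} {F₂ : X₂ → U → Set X₂}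
  {Q : X₁ → X₂ → Prop} {x₁ x₁' : X₁} {x₂ x₂' : X₂} {u : U}

theorem nonempty_of_rel (hQ : IsFRR U₁ U₂ F₁ F₂ Q) (hx : Q x₁ x₂) (hu : u ∈ U₂)
    (hne : (F₂ x₂ u).Nonempty) : (F₁ x₁ u).Nonempty :=
  (hQ.2.2 x₁ x₂ hx u hu hne).1

theorem mem_of_rel_of_mem (hQ : IsFRR U₁ U₂ F₁ F₂ Q) (hx : Q x₁ x₂) (hu : u ∈ U₂)
    (hne : (F₂ x₂ u).Nonempty) (hx₁' : x₁' ∈ F₁ x₁ u) (hx' : Q x₁' x₂') :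
    x₂' ∈ F₂ x₂ u :=
  (hQ.2.2 x₁ x₂ hx u hu hne).2 x₁' hx₁' x₂' hx'

end IsFRR

/-- behavioral inclusion, finite-trajectory core.  (a) the related
abstract sequence is a trajectory of `S₂`; (b) if `T = n+1` is finite and the input
at the last instant is admissible for `S₂`, then `S₁` does not block there. -/
theorem frr_behavioral_core {X₁ X₂ U : Type*} (U₁ U₂ : Set U)
    (F₁ : X₁ → U → Set X₁) (F₂ : X₂ → U → Set X₂) (Q : X₁ → X₂ → Prop)
    (hQ : IsFRR U₁ U₂ F₁ F₂ Q) (T : ℕ∞)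
    (u : ℕ → U) (x₁ : ℕ → X₁) (x₂ : ℕ → X₂)
    (htraj : ∀ t : ℕ, ((t + 1 : ℕ) : ℕ∞) < T → x₁ (t + 1) ∈ F₁ (x₁ t) (u t))
    (hrel : ∀ t : ℕ, (t : ℕ∞) < T → Q (x₁ t) (x₂ t))
    (hadm : ∀ t : ℕ, ((t + 1 : ℕ) : ℕ∞) < T →
      u t ∈ U₂ ∧ (F₂ (x₂ t) (u t)).Nonempty) :
    (∀ t : ℕ, ((t + 1 : ℕ) : ℕ∞) < T → x₂ (t + 1) ∈ F₂ (x₂ t) (u t)) ∧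
    (∀ n : ℕ, T = ((n + 1 : ℕ) : ℕ∞) →
      u n ∈ U₂ → (F₂ (x₂ n) (u n)).Nonempty → (F₁ (x₁ n) (u n)).Nonempty) := by
  refine ⟨fun t ht => ?_, fun n hT hu hne => ?_⟩
  · obtain ⟨hu, hne⟩ := hadm t ht
    have ht' : (t : ℕ∞) < T := (Nat.cast_lt.mpr t.lt_succ_self).trans ht
    exact hQ.mem_of_rel_of_mem (hrel t ht') hu hne (htraj t ht) (hrel (t + 1) ht)
  · have hn : (n : ℕ∞) < T := hT ▸ Nat.cast_lt.mpr n.lt_succ_self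
    exact hQ.nonempty_of_rel (hrel n hn) hu hne
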